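/- arXiv:2604.10771 — 4 statements merged into one kernel-verified Lean document; each statement's English description precedes it below -/
import Mathlib

section
/- Let X be a Banach space over 𝕜 (𝕜 = ℝ or ℂ) and let W be a finite-dimensional subspace of the continuous dual X*. Then the infimum of ‖Q‖ over all weak*-continuous bounded linear projections Q : X* → X* with range W equals the infimum of ‖Q‖ over all bounded linear projections Q : X* → X* with range W; that is, λ_{w*}(W, X*) = λ(W, X*). -/
open MeasureTheory NormedSpace

noncomputable section

variable {𝕜 : Type*} [RCLike 𝕜] {F : Type*} [NormedAddCommGroup F] [NormedSpace 𝕜 F]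

/-- `P` is a bounded linear projection from `F` onto the subspace `E`. -/
def IsProjectionOnto (E : Submodule 𝕜 F) (P : F →L[𝕜] F) : Prop :=
  (∀ x, P x ∈ E) ∧ ∀ e ∈ E, P e = e

/-- The relative projection constant of `E` in `F`:
the infimum of the norms of all bounded linear projections from `F` onto `E`. -/
def projConst (E : Submodule 𝕜 F) : ℝ :=
  sInf {c : ℝ | ∃ P : F →L[𝕜] F, IsProjectionOnto E P ∧ ‖P‖ = c}

/-- An operator on a dual space is weak*-continuous if it is continuous for the
weak* topology on both domain and codomain. -/
def IsWeakStarContinuous {X : Type*} [NormedAddCommGroup X] [NormedSpace 𝕜 X]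
    (Q : StrongDual 𝕜 X →L[𝕜] StrongDual 𝕜 X) : Prop :=
  Continuous fun f : WeakDual 𝕜 X =>
    StrongDual.toWeakDual (Q (StrongDual.toWeakDual.symm f))


set_option synthInstance.maxHeartbeats 1000000
set_option maxHeartbeats 4000000

section InstSec

abbrev instACGSubStrongDual {X : Type*} [NormedAddCommGroup X] [NormedSpace 𝕜 X]
    (V : Submodule 𝕜 (StrongDual 𝕜 X)) : AddCommGroup V :=
  @Submodule.addCommGroup 𝕜 (StrongDual 𝕜 X) _ ContinuousLinearMap.addCommGroup _ V
attribute [local instance] instACGSubStrongDual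
abbrev instNACGSubStrongDual {X : Type*} [NormedAddCommGroup X] [NormedSpace 𝕜 X]
    (V : Submodule 𝕜 (StrongDual 𝕜 X)) : NormedAddCommGroup V :=
  let m := NormedAddCommGroup.induced V (StrongDual 𝕜 X) V.subtype.toAddMonoidHom
    Subtype.val_injective
  { m with toMetricSpace := m.toMetricSpace.replaceTopology rfl }
attribute [local instance] instNACGSubStrongDual
abbrev instSNACGSubStrongDual {X : Type*} [NormedAddCommGroup X] [NormedSpace 𝕜 X]
    (V : Submodule 𝕜 (StrongDual 𝕜 X)) : SeminormedAddCommGroup V :=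
  (instNACGSubStrongDual V).toSeminormedAddCommGroup
attribute [local instance] instSNACGSubStrongDual
abbrev instNSSubStrongDual {X : Type*} [NormedAddCommGroup X] [NormedSpace 𝕜 X]
    (V : Submodule 𝕜 (StrongDual 𝕜 X)) : NormedSpace 𝕜 V :=
  { (Submodule.module V : Module 𝕜 V) with
    norm_smul_le := fun c x => norm_smul_le c (x : StrongDual 𝕜 X) }
attribute [local instance] instNSSubStrongDual
abbrev instNSCDoubleDual {X : Type*} [NormedAddCommGroup X] [NormedSpace 𝕜 X] :
    NormSMulClass 𝕜 (StrongDual 𝕜 (StrongDual 𝕜 X)) :=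
  NormedSpace.toNormSMulClass (𝕜 := 𝕜) (E := StrongDual 𝕜 (StrongDual 𝕜 X))

attribute [local instance] instNSCDoubleDual

section Helpers
variable {X : Type*} [NormedAddCommGroup X] [NormedSpace 𝕜 X]

/-- Evaluation of points of `X` on a submodule of the continuous dual. -/
def evalV (V : Submodule 𝕜 (StrongDual 𝕜 X)) : X →ₗ[𝕜] Module.Dual 𝕜 V where
  toFun x :=
    { toFun := fun v => (v : StrongDual 𝕜 X) x
      map_add' := by intro v v'; simp
      map_smul' := by intro c v; simp }
  map_add' := by intro x x'; ext v; simp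
  map_smul' := by intro c x; ext v; simp

lemma evalV_surjective (V : Submodule 𝕜 (StrongDual 𝕜 X)) [FiniteDimensional 𝕜 V] :
    Function.Surjective (evalV (𝕜 := 𝕜) (X := X) V) := by
  intro φ
  by_contra h
  have hφ : φ ∉ LinearMap.range (evalV (𝕜 := 𝕜) (X := X) V) := by
    simpa using h
  obtain ⟨ξ, hξ1, hξ2⟩ :=
    Submodule.exists_dual_map_eq_bot_of_notMem hφ inferInstance
  set v := (Module.evalEquiv 𝕜 V).symm ξ with hv
  have hξv : Module.evalEquiv 𝕜 V v = ξ := by simp [hv]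
  have hvx : ∀ x : X, (v : StrongDual 𝕜 X) x = 0 := by
    intro x
    have hmem : evalV (𝕜 := 𝕜) V x ∈ LinearMap.range (evalV (𝕜 := 𝕜) (X := X) V) := ⟨x, rfl⟩
    have : ξ (evalV (𝕜 := 𝕜) V x) = 0 := by
      have := hξ2 ▸ Submodule.mem_map_of_mem (f := ξ) hmem
      simpa using this
    rw [← hξv] at this
    simpa [Module.evalEquiv_apply, evalV] using this
  have hv0 : v = 0 := by
    ext x
    exact hvx x
  rw [hv0] at hξv
  simp at hξv
  rw [← hξv] at hξ1
  simp at hξ1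

lemma mem_of_preann (W : Submodule 𝕜 (StrongDual 𝕜 X)) [FiniteDimensional 𝕜 W]
    (F : StrongDual 𝕜 X) (hF : ∀ x : X, (∀ v ∈ W, v x = 0) → F x = 0) : F ∈ W := by
  by_contra hFW
  set V : Submodule 𝕜 (StrongDual 𝕜 X) := W ⊔ Submodule.span 𝕜 {F} with hV
  have : FiniteDimensional 𝕜 V := by
    apply Submodule.finiteDimensional_sup
  have hFV : F ∈ V := by
    apply Submodule.mem_sup_right
    exact Submodule.mem_span_singleton_self F
  set W' : Submodule 𝕜 V := W.comap V.subtype with hW'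
  have hF'W' : (⟨F, hFV⟩ : V) ∉ W' := by
    simpa [hW'] using hFW
  obtain ⟨f, hf1, hf2⟩ := Submodule.exists_dual_map_eq_bot_of_notMem hF'W' inferInstance
  obtain ⟨x, hx⟩ := evalV_surjective V f
  have hWx : ∀ v ∈ W, v x = 0 := by
    intro v hv
    have hvV : v ∈ V := Submodule.mem_sup_left hv
    have h1 : (⟨v, hvV⟩ : V) ∈ W' := by simpa [hW'] using hv
    have h2 : f ⟨v, hvV⟩ = 0 := by
      have := hf2 ▸ Submodule.mem_map_of_mem (f := f) h1
      simpa using this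
    have h3 : (evalV V) x ⟨v, hvV⟩ = v x := rfl
    rw [← h3, hx, h2]
  have h4 : (evalV V) x ⟨F, hFV⟩ = F x := rfl
  rw [hx] at h4
  rw [hF x hWx] at h4
  exact hf1 h4

lemma key_separation {n : ℕ} {ι : Type*} [Fintype ι]
    (Y : Submodule 𝕜 X) (x₀ : Fin n → X) (ψ : Fin n → StrongDual 𝕜 (StrongDual 𝕜 X))
    (hΔ : ∀ i, ∀ F : StrongDual 𝕜 X, (∀ y ∈ Y, F y = 0) → ψ i F = F (x₀ i))
    (a : ι → Fin n → 𝕜)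
    (hr : ∀ j, ‖∑ i, a j i • ψ i‖ < 1) :
    ∃ y : Fin n → X, (∀ i, y i ∈ Y) ∧
      ∀ j, ‖∑ i, a j i • (x₀ i + y i)‖ ≤ 1 := by
  classical
  by_contra hcon
  push_neg at hcon
  -- the linear map assembling the constraints
  set L : (Fin n → X) →ₗ[𝕜] (ι → X) :=
    LinearMap.pi (fun j => ∑ i, a j i • LinearMap.proj i) with hL
  have hLapp : ∀ (z : Fin n → X) (j : ι), L z j = ∑ i, a j i • z i := by
    intro z j
    simp [hL, LinearMap.pi_apply, LinearMap.sum_apply]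
  set t : ι → X := L x₀ with ht
  set P : Submodule 𝕜 (Fin n → X) := Submodule.pi Set.univ (fun _ => Y) with hP
  set E : Submodule 𝕜 (ι → X) := P.map L with hE
  set Ebar := E.topologicalClosure with hEbar
  haveI : IsClosed (Ebar : Set (ι → X)) := Submodule.isClosed_topologicalClosure E
  -- every element of E violates the constraints
  have h1 : ∀ e ∈ E, 1 < ‖t + e‖ := by
    rintro e ⟨y, hy, rfl⟩
    have hyY : ∀ i, y i ∈ Y := by
      intro i
      exact hy i (Set.mem_univ i)
    obtain ⟨j, hj⟩ := hcon y hyY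
    refine lt_of_lt_of_le hj (le_trans (le_of_eq ?_) (norm_le_pi_norm (t + L y) j))
    have hv : (t + L y) j = ∑ i, a j i • (x₀ i + y i) := by
      have h0 : (t + L y) j = t j + L y j := rfl
      rw [h0, ht, hLapp x₀ j, hLapp y j, ← Finset.sum_add_distrib]
      exact Finset.sum_congr rfl (fun i _ => (smul_add _ _ _).symm)
    rw [hv]
  have h2 : ∀ e ∈ Ebar, 1 ≤ ‖t + e‖ := by
    intro e he
    have he' : e ∈ closure (E : Set (ι → X)) := he
    refine le_of_forall_pos_le_add ?_
    intro δ hδ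
    obtain ⟨e', he', hd⟩ := Metric.mem_closure_iff.1 he' δ hδ
    have := h1 e' he'
    have : (1 : ℝ) < ‖t + e‖ + δ := by
      calc (1:ℝ) < ‖t + e'‖ := this
        _ ≤ ‖t + e‖ + ‖e' - e‖ := by
            have : t + e' = (t + e) + (e' - e) := by abel
            rw [this]
            exact norm_add_le _ _
        _ ≤ ‖t + e‖ + δ := by
            have : ‖e' - e‖ ≤ δ := by
              rw [dist_eq_norm] at hd
              rw [norm_sub_rev]
              exact le_of_lt hd
            linarith
    linarith
  -- pass to the quotient
  have h3 : 1 ≤ ‖(Submodule.Quotient.mk t : (ι → X) ⧸ Ebar)‖ := by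
    by_contra h
    push_neg at h
    obtain ⟨m, hm, hmn⟩ := Submodule.Quotient.norm_mk_lt
      (Submodule.Quotient.mk t : (ι → X) ⧸ Ebar) (sub_pos.2 h)
    have hmem : m - t ∈ Ebar := by
      rw [← Submodule.Quotient.eq]
      exact hm.symm ▸ rfl
    have := h2 (m - t) hmem
    rw [add_sub_cancel] at this
    linarith
  have hne : (Submodule.Quotient.mk t : (ι → X) ⧸ Ebar) ≠ 0 := by
    intro h
    rw [h, norm_zero] at h3
    linarith
  obtain ⟨g, hg1, hg2⟩ := exists_dual_vector 𝕜 (Submodule.Quotient.mk t : (ι → X) ⧸ Ebar) (norm_ne_zero_iff.2 hne)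
  -- the quotient map as a continuous linear map
  set mkC : (ι → X) →L[𝕜] ((ι → X) ⧸ Ebar) :=
    LinearMap.mkContinuous Ebar.mkQ 1
      (fun v => by simpa [one_mul] using Submodule.Quotient.norm_mk_le Ebar v) with hmkC
  set f : (ι → X) →L[𝕜] 𝕜 := g.comp mkC with hf
  have hfnorm : ‖f‖ ≤ 1 := by
    refine ContinuousLinearMap.opNorm_le_bound _ zero_le_one ?_
    intro v
    calc ‖f v‖ ≤ ‖g‖ * ‖mkC v‖ := g.le_opNorm _
      _ ≤ 1 * (1 * ‖v‖) := by
          refine mul_le_mul (le_of_eq hg1) ?_ (norm_nonneg _) zero_le_one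
          rw [one_mul]; exact Submodule.Quotient.norm_mk_le Ebar v
      _ = 1 * ‖v‖ := by ring
  have hfE : ∀ e ∈ E, f e = 0 := by
    intro e he
    have : (Submodule.Quotient.mk e : (ι → X) ⧸ Ebar) = 0 := by
      rw [Submodule.Quotient.mk_eq_zero]
      exact E.le_topologicalClosure he
    show g (mkC e) = 0
    have hmk : mkC e = Submodule.Quotient.mk e := rfl
    rw [hmk, this, _root_.map_zero]
  have hft : f t = (‖(Submodule.Quotient.mk t : (ι → X) ⧸ Ebar)‖ : 𝕜) := hg2
  -- components of f
  set sing : ∀ j : ι, X →L[𝕜] (ι → X) := fun j =>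
    LinearMap.mkContinuous (LinearMap.single 𝕜 (fun _ => X) j) 1
      (fun v => by
        rw [one_mul]
        rw [LinearMap.single_apply, Pi.norm_single]) with hsing
  set fc : ι → StrongDual 𝕜 X := fun j => f.comp (sing j) with hfc
  have hdecomp : ∀ v : ι → X, f v = ∑ j, fc j (v j) := by
    intro v
    conv_lhs => rw [← Finset.univ_sum_single v]
    rw [_root_.map_sum]
    exact Finset.sum_congr rfl (fun j _ => rfl)
  have hsum : ∑ j, ‖fc j‖ ≤ 1 := by
    refine le_of_forall_pos_le_add ?_
    intro δ hδ
    set N : ℝ := (Fintype.card ι : ℝ) + 1 with hN0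
    have hN : 0 < N := by positivity
    set δ' := δ / N with hδ'
    have hδ'0 : 0 < δ' := by positivity
    have hu : ∀ j : ι, ∃ u : X, ‖u‖ ≤ 1 ∧ ‖fc j‖ - δ' ≤ ‖fc j u‖ := by
      intro j
      by_cases hj : ‖fc j‖ ≤ δ'
      · refine ⟨0, by simp, by simp; linarith⟩
      · push_neg at hj
        obtain ⟨u, hu1, hu2⟩ := (fc j).exists_lt_apply_of_lt_opNorm (sub_lt_self _ hδ'0)
        exact ⟨u, le_of_lt hu1, le_of_lt hu2⟩
    choose u hu1 hu2 using hu
    have hθ : ∀ j : ι, ∃ θ : 𝕜, ‖θ‖ ≤ 1 ∧ fc j (θ • u j) = ((‖fc j (u j)‖ : ℝ) : 𝕜) := by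
      intro j
      by_cases hc : fc j (u j) = 0
      · exact ⟨1, by simp, by simp [hc]⟩
      · refine ⟨((‖fc j (u j)‖ : ℝ) : 𝕜) / fc j (u j), ?_, ?_⟩
        · rw [norm_div, RCLike.norm_ofReal, abs_norm]
          exact le_of_eq (div_self (norm_ne_zero_iff.2 hc))
        · rw [_root_.map_smul, smul_eq_mul]
          field_simp
    choose θ hθ1 hθ2 using hθ
    set v : ι → X := fun j => θ j • u j with hv
    have hvnorm : ‖v‖ ≤ 1 := by
      refine (pi_norm_le_iff_of_nonneg zero_le_one).2 ?_
      intro j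
      rw [hv]
      calc ‖θ j • u j‖ = ‖θ j‖ * ‖u j‖ := norm_smul _ _
        _ ≤ 1 * 1 := mul_le_mul (hθ1 j) (hu1 j) (norm_nonneg _) zero_le_one
        _ = 1 := one_mul 1
    have hfv : f v = ((∑ j, ‖fc j (u j)‖ : ℝ) : 𝕜) := by
      rw [hdecomp v, RCLike.ofReal_sum]
      exact Finset.sum_congr rfl (fun j _ => hθ2 j)
    have h5 : ∑ j, ‖fc j (u j)‖ ≤ 1 := by
      have h6 : ‖f v‖ = ∑ j, ‖fc j (u j)‖ := by
        rw [hfv, RCLike.norm_ofReal]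
        exact abs_of_nonneg (Finset.sum_nonneg (fun j _ => norm_nonneg _))
      calc ∑ j, ‖fc j (u j)‖ = ‖f v‖ := h6.symm
        _ ≤ ‖f‖ * ‖v‖ := f.le_opNorm v
        _ ≤ 1 * 1 := mul_le_mul hfnorm hvnorm (norm_nonneg _) zero_le_one
        _ = 1 := one_mul 1
    have hcard : (Fintype.card ι : ℝ) * δ' ≤ δ := by
      rw [hδ']
      rw [div_eq_inv_mul]
      have h7 : (Fintype.card ι : ℝ) ≤ N := by rw [hN0]; linarith
      calc (Fintype.card ι : ℝ) * (N⁻¹ * δ) ≤ N * (N⁻¹ * δ) := by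
            refine mul_le_mul_of_nonneg_right h7 ?_
            positivity
        _ = δ := by field_simp
    calc ∑ j, ‖fc j‖ ≤ ∑ j, (‖fc j (u j)‖ + δ') :=
          Finset.sum_le_sum (fun j _ => by linarith [hu2 j])
      _ = (∑ j, ‖fc j (u j)‖) + (Fintype.card ι : ℝ) * δ' := by
          rw [Finset.sum_add_distrib, Finset.sum_const, nsmul_eq_mul, Finset.card_univ]
      _ ≤ 1 + δ := add_le_add h5 hcard
  set Fn : Fin n → StrongDual 𝕜 X := fun i => ∑ j, a j i • fc j with hFn
  have hLf : ∀ z : Fin n → X, f (L z) = ∑ i, Fn i (z i) := by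
    intro z
    rw [hdecomp]
    have hterm : ∀ j, fc j (L z j) = ∑ i, a j i * fc j (z i) := by
      intro j
      rw [hLapp z j, _root_.map_sum]
      exact Finset.sum_congr rfl (fun i _ => by rw [_root_.map_smul, smul_eq_mul])
    rw [Finset.sum_congr rfl (fun j _ => hterm j), Finset.sum_comm]
    refine Finset.sum_congr rfl (fun i _ => ?_)
    rw [hFn]
    simp only [ContinuousLinearMap.coe_sum', Finset.sum_apply,
      ContinuousLinearMap.coe_smul', Pi.smul_apply, smul_eq_mul]
  have hFY : ∀ i, ∀ z ∈ Y, Fn i z = 0 := by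
    intro i z hz
    have hmem : Pi.single i z ∈ P := by
      intro k _
      rcases eq_or_ne k i with rfl | hk
      · simpa using hz
      · rw [Pi.single_eq_of_ne hk]
        exact Y.zero_mem
    have h0 : f (L (Pi.single i z)) = 0 := hfE _ (Submodule.mem_map_of_mem hmem)
    rw [hLf] at h0
    rw [Finset.sum_eq_single_of_mem i (Finset.mem_univ i)
      (fun k _ hk => by rw [Pi.single_eq_of_ne hk, _root_.map_zero])] at h0
    rwa [Pi.single_eq_same] at h0
  have hft2 : f t = ∑ j, (∑ i, a j i • ψ i) (fc j) := by
    rw [ht, hLf x₀]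
    rw [Finset.sum_congr rfl (fun i _ => (hΔ i (Fn i) (hFY i)).symm)]
    have hpsi : ∀ i, ψ i (Fn i) = ∑ j, a j i * ψ i (fc j) := by
      intro i
      rw [hFn]
      simp only [_root_.map_sum, _root_.map_smul, smul_eq_mul]
    rw [Finset.sum_congr rfl (fun i _ => hpsi i), Finset.sum_comm]
    refine Finset.sum_congr rfl (fun j _ => ?_)
    simp only [ContinuousLinearMap.coe_sum', Finset.sum_apply,
      ContinuousLinearMap.coe_smul', Pi.smul_apply, smul_eq_mul]
  have hnorm1 : (1 : ℝ) ≤ ‖f t‖ := by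
    rw [hft, RCLike.norm_ofReal]
    rw [abs_of_nonneg (norm_nonneg _)]
    exact h3
  by_cases hz : ∀ j, fc j = (0 : StrongDual 𝕜 X)
  · have : f t = 0 := by
      rw [hft2]
      refine Finset.sum_eq_zero (fun j _ => ?_)
      rw [hz j, _root_.map_zero]
    rw [this, norm_zero] at hnorm1
    linarith
  · push_neg at hz
    obtain ⟨j₀, hj₀⟩ := hz
    have hub : ‖f t‖ ≤ ∑ j, ‖∑ i, a j i • ψ i‖ * ‖fc j‖ := by
      rw [hft2]
      exact le_trans (norm_sum_le _ _)
        (Finset.sum_le_sum (fun j _ => (∑ i, a j i • ψ i).le_opNorm (fc j)))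
    have hstrict : ∑ j, ‖∑ i, a j i • ψ i‖ * ‖fc j‖ < ∑ j, ‖fc j‖ := by
      refine Finset.sum_lt_sum (fun j _ => ?_) ⟨j₀, Finset.mem_univ j₀, ?_⟩
      · exact mul_le_of_le_one_left (norm_nonneg _) (le_of_lt (hr j))
      · exact mul_lt_of_lt_one_left (norm_pos_iff.2 hj₀) (hr j₀)
    linarith

/-- finite-rank weak-star continuous operator on a dual space -/
def projMap {n : ℕ} (x : Fin n → X) (v : Fin n → StrongDual 𝕜 X) : StrongDual 𝕜 X →L[𝕜] StrongDual 𝕜 X :=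
  ∑ i, (inclusionInDoubleDual 𝕜 X (x i)).smulRight (v i)

lemma projMap_apply {n : ℕ} (x : Fin n → X) (v : Fin n → StrongDual 𝕜 X) (f : StrongDual 𝕜 X) :
    projMap x v f = ∑ i, f (x i) • v i := by
  simp [projMap, ContinuousLinearMap.sum_apply, ContinuousLinearMap.smulRight_apply, dual_def]

lemma projMap_weakStar {n : ℕ} (x : Fin n → X) (v : Fin n → StrongDual 𝕜 X) :
    Continuous fun f : WeakDual 𝕜 X =>
      StrongDual.toWeakDual (projMap x v (StrongDual.toWeakDual.symm f)) := by
  apply WeakDual.continuous_of_continuous_eval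
  intro z
  have hfun : (fun f : WeakDual 𝕜 X =>
      (StrongDual.toWeakDual (projMap x v (StrongDual.toWeakDual.symm f))) z)
      = fun f : WeakDual 𝕜 X => ∑ i, f (x i) * (v i) z := by
    funext f
    show (projMap x v (StrongDual.toWeakDual.symm f)) z = _
    rw [projMap_apply]
    show (∑ i, (StrongDual.toWeakDual.symm f) (x i) • v i) z = _
    rw [ContinuousLinearMap.sum_apply]
    exact Finset.sum_congr rfl (fun i _ => rfl)
  rw [hfun]
  exact continuous_finset_sum _ (fun i _ =>
    (WeakDual.eval_continuous (x i)).mul continuous_const)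

lemma isProjectionOnto_projMap {n : ℕ} (W : Submodule 𝕜 (StrongDual 𝕜 X))
    (w : Module.Basis (Fin n) 𝕜 W) (x : Fin n → X)
    (hd : ∀ i j, ((w j : StrongDual 𝕜 X)) (x i) = if j = i then 1 else 0) :
    IsProjectionOnto W (projMap x (fun i => (w i : StrongDual 𝕜 X))) := by
  constructor
  · intro f
    rw [projMap_apply]
    exact Submodule.sum_mem W (fun i _ => Submodule.smul_mem W _ (w i).2)
  · intro e he
    rw [projMap_apply]
    have hrep := w.sum_repr ⟨e, he⟩
    have hrep' : e = ∑ j, (w.repr ⟨e, he⟩) j • (w j : StrongDual 𝕜 X) := by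
      have := congrArg (Submodule.subtype W) hrep
      simp only [_root_.map_sum, _root_.map_smul, Submodule.coe_subtype] at this
      exact this.symm
    have hcoef : ∀ i, e (x i) = (w.repr ⟨e, he⟩) i := by
      intro i
      have h0 := congrArg (fun T : StrongDual 𝕜 X => T (x i)) hrep'
      rw [h0, ContinuousLinearMap.sum_apply]
      rw [Finset.sum_eq_single_of_mem i (Finset.mem_univ i) (fun j _ hj => by
        rw [ContinuousLinearMap.smul_apply, hd i j, if_neg hj, smul_zero])]
      rw [ContinuousLinearMap.smul_apply, hd i i, if_pos rfl, smul_eq_mul, mul_one]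
    rw [Finset.sum_congr rfl (fun i _ => by rw [hcoef i])]
    exact hrep'.symm

lemma projMap_norm_le {n : ℕ} (W : Submodule 𝕜 (StrongDual 𝕜 X))
    (w : Fin n → W) (x : Fin n → X) (C : ℝ) (hC : 0 ≤ C)
    (h : ∀ g : StrongDual 𝕜 W, ‖∑ i, g (w i) • x i‖ ≤ C * ‖g‖) :
    ‖projMap x (fun i => (w i : StrongDual 𝕜 X))‖ ≤ C := by
  refine ContinuousLinearMap.opNorm_le_bound _ hC ?_
  intro f
  rw [projMap_apply]
  set u : W := ∑ i, f (x i) • w i with hu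
  have hcoe : (u : StrongDual 𝕜 X) = ∑ i, f (x i) • (w i : StrongDual 𝕜 X) := by
    rw [hu]
    push_cast
    rfl
  rw [← hcoe]
  have : ‖(u : StrongDual 𝕜 X)‖ = ‖u‖ := rfl
  rw [this]
  have hiso : ‖u‖ = ‖inclusionInDoubleDual 𝕜 W u‖ :=
    ((inclusionInDoubleDualLi 𝕜 (E := W)).norm_map u).symm
  rw [hiso]
  refine ContinuousLinearMap.opNorm_le_bound _ (by positivity) ?_
  intro g
  rw [dual_def]
  have hgu : g u = f (∑ i, g (w i) • x i) := by
    rw [hu, _root_.map_sum]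
    rw [_root_.map_sum]
    refine Finset.sum_congr rfl (fun i _ => ?_)
    rw [_root_.map_smul, _root_.map_smul]
    rw [smul_eq_mul, smul_eq_mul, mul_comm]
  rw [hgu]
  calc ‖f (∑ i, g (w i) • x i)‖ ≤ ‖f‖ * ‖∑ i, g (w i) • x i‖ := f.le_opNorm _
    _ ≤ ‖f‖ * (C * ‖g‖) := by
        refine mul_le_mul_of_nonneg_left (h g) (norm_nonneg f)
    _ = C * ‖f‖ * ‖g‖ := by ring


theorem wstar_projConst_eq_projConst_aux
    (X : Type*) [NormedAddCommGroup X] [NormedSpace 𝕜 X] [CompleteSpace X]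
    (W : Submodule 𝕜 (StrongDual 𝕜 X)) [FiniteDimensional 𝕜 W] :
    sInf {c : ℝ | ∃ Q : StrongDual 𝕜 X →L[𝕜] StrongDual 𝕜 X,
        IsProjectionOnto W Q ∧ IsWeakStarContinuous Q ∧ ‖Q‖ = c} = projConst W := by
    classical
  have hProj : projConst W = sInf {c : ℝ |
      ∃ P : StrongDual 𝕜 X →L[𝕜] StrongDual 𝕜 X, IsProjectionOnto W P ∧ ‖P‖ = c} := rfl
  set Sa := {c : ℝ | ∃ P : StrongDual 𝕜 X →L[𝕜] StrongDual 𝕜 X, IsProjectionOnto W P ∧ ‖P‖ = c} with hSa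
  set Sw := {c : ℝ | ∃ Q : StrongDual 𝕜 X →L[𝕜] StrongDual 𝕜 X,
      IsProjectionOnto W Q ∧ IsWeakStarContinuous Q ∧ ‖Q‖ = c} with hSw
  rw [hProj]
  set n := Module.finrank 𝕜 W with hn
  set w : Module.Basis (Fin n) 𝕜 W := Module.finBasis 𝕜 W with hw
  have hx₀ex : ∀ i : Fin n, ∃ x : X, ∀ v : W, (v : StrongDual 𝕜 X) x = w.coord i v := by
    intro i
    obtain ⟨x, hx⟩ := evalV_surjective W (w.coord i)
    exact ⟨x, fun v => by rw [← hx]; rfl⟩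
  choose x₀ hx₀ using hx₀ex
  have hd₀ : ∀ i j, ((w j : StrongDual 𝕜 X)) (x₀ i) = if j = i then 1 else 0 := by
    intro i j
    rw [hx₀ i (w j), Module.Basis.coord_apply, Module.Basis.repr_self]
    exact Finsupp.single_apply
  have hQ0 : IsProjectionOnto W (projMap x₀ (fun i => ((w i : StrongDual 𝕜 X)))) :=
    isProjectionOnto_projMap W w x₀ hd₀
  have hQ0w : IsWeakStarContinuous (projMap x₀ (fun i => ((w i : StrongDual 𝕜 X)))) :=
    projMap_weakStar _ _
  have hSwne : Sw.Nonempty := ⟨_, _, hQ0, hQ0w, rfl⟩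
  have hSane : Sa.Nonempty := ⟨_, _, hQ0, rfl⟩
  have hSwSa : Sw ⊆ Sa := by
    rintro c ⟨Q, h1, _, h3⟩
    exact ⟨Q, h1, h3⟩
  have hbdd : BddBelow Sa := by
    refine ⟨0, ?_⟩
    rintro c ⟨P, _, rfl⟩
    exact norm_nonneg P
  have hbddw : BddBelow Sw := hbdd.mono hSwSa
  refine le_antisymm ?_ (csInf_le_csInf hbdd hSwne hSwSa)
  refine le_csInf hSane ?_
  rintro c ⟨Q, hQproj, rfl⟩
  refine le_of_forall_pos_le_add ?_
  intro ε hε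
  set M := ‖Q‖ with hM
  have hM0 : (0:ℝ) ≤ M := norm_nonneg Q
  have hQmem : ∀ f, Q f ∈ W := hQproj.1
  set QW : StrongDual 𝕜 X →L[𝕜] W := Q.codRestrict W hQmem with hQW
  set ψ : Fin n → StrongDual 𝕜 (StrongDual 𝕜 X) :=
    fun i => (LinearMap.toContinuousLinearMap (w.coord i)).comp QW with hψdef
  have hψapp : ∀ i f, ψ i f = w.repr ⟨Q f, hQmem f⟩ i := by
    intro i f
    show (LinearMap.toContinuousLinearMap (w.coord i)) (QW f) = _
    rw [LinearMap.coe_toContinuousLinearMap']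
    rw [Module.Basis.coord_apply]
    rfl
  have hψmem : ∀ i (v : W), ψ i (v : StrongDual 𝕜 X) = w.repr v i := by
    intro i v
    have h2 : (⟨Q (v : StrongDual 𝕜 X), hQmem _⟩ : W) = v := Subtype.ext (hQproj.2 _ v.2)
    rw [hψapp, h2]
  have hWrep : ∀ u : W, (u : StrongDual 𝕜 X) = ∑ i, w.repr u i • (w i : StrongDual 𝕜 X) := by
    intro u
    have h3 := congrArg (Submodule.subtype W) (w.sum_repr u)
    simp only [_root_.map_sum, _root_.map_smul, Submodule.coe_subtype] at h3
    exact h3.symm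
  have hGb : ∀ g : StrongDual 𝕜 W, ‖∑ i, g (w i) • ψ i‖ ≤ M * ‖g‖ := by
    intro g
    refine ContinuousLinearMap.opNorm_le_bound _ (by positivity) (fun f => ?_)
    have h4 : (∑ i, g (w i) • ψ i) f = g ⟨Q f, hQmem f⟩ := by
      rw [ContinuousLinearMap.sum_apply]
      have h5 : g ⟨Q f, hQmem f⟩ = ∑ i, w.repr ⟨Q f, hQmem f⟩ i • g (w i) := by
        conv_lhs => rw [← w.sum_repr ⟨Q f, hQmem f⟩]
        rw [_root_.map_sum]
        exact Finset.sum_congr rfl (fun i _ => by rw [_root_.map_smul])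
      rw [h5]
      refine Finset.sum_congr rfl (fun i _ => ?_)
      rw [ContinuousLinearMap.smul_apply, hψapp, smul_eq_mul, smul_eq_mul, mul_comm]
    rw [h4]
    calc ‖g ⟨Q f, hQmem f⟩‖ ≤ ‖g‖ * ‖(⟨Q f, hQmem f⟩ : W)‖ := g.le_opNorm _
      _ = ‖g‖ * ‖Q f‖ := rfl
      _ ≤ ‖g‖ * (M * ‖f‖) := by
          refine mul_le_mul_of_nonneg_left ?_ (norm_nonneg g)
          exact Q.le_opNorm f
      _ = M * ‖g‖ * ‖f‖ := by ring
  set Y : Submodule 𝕜 X :=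
    { carrier := {z : X | ∀ v ∈ W, v z = 0}
      add_mem' := by
        intro a b ha hb v hv
        rw [_root_.map_add, ha v hv, hb v hv, add_zero]
      zero_mem' := by
        intro v hv
        exact _root_.map_zero v
      smul_mem' := by
        intro cc z hz v hv
        rw [_root_.map_smul, hz v hv, smul_zero] } with hY
  have hΔ : ∀ i, ∀ F : StrongDual 𝕜 X, (∀ z ∈ Y, F z = 0) → ψ i F = F (x₀ i) := by
    intro i F hF
    have hFW : F ∈ W := mem_of_preann W F (fun x hx => hF x hx)
    have h11 : ψ i F = w.repr ⟨F, hFW⟩ i := hψmem i ⟨F, hFW⟩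
    have h12 : F (x₀ i) = w.repr ⟨F, hFW⟩ i := by
      have h13 := congrArg (fun T : StrongDual 𝕜 X => T (x₀ i)) (hWrep ⟨F, hFW⟩)
      simp only at h13
      rw [h13, ContinuousLinearMap.sum_apply]
      rw [Finset.sum_eq_single_of_mem i (Finset.mem_univ i) (fun j _ hj => by
        rw [ContinuousLinearMap.smul_apply, hd₀ i j, if_neg hj, smul_zero])]
      rw [ContinuousLinearMap.smul_apply, hd₀ i i, if_pos rfl, smul_eq_mul, mul_one]
    rw [h11, h12]
  haveI : ProperSpace (StrongDual 𝕜 W) := FiniteDimensional.proper 𝕜 _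
  set R : Fin n → ℝ := fun i => ‖ψ i‖ + 1 with hR
  have hR0 : ∀ i, 0 < R i := fun i => by positivity
  set D : ℝ := (∑ i, ‖(w i : StrongDual 𝕜 X)‖ * R i) + 1 with hD
  have hsum0 : 0 ≤ ∑ i, ‖(w i : StrongDual 𝕜 X)‖ * R i :=
    Finset.sum_nonneg (fun i _ => mul_nonneg (norm_nonneg _) (le_of_lt (hR0 i)))
  have hD0 : 0 < D := by
    rw [hD]; linarith
  set δ := ε / 2 / D with hδdef
  have hδ0 : 0 < δ := by positivity
  obtain ⟨T, hTB, hTfin, hTcov⟩ :=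
    (isCompact_closedBall (0 : StrongDual 𝕜 W) 1).finite_cover_balls hδ0
  haveI := hTfin.fintype
  set Me := M + ε / 2 with hMe
  have hMe0 : 0 < Me := by positivity
  set cA : (↥T ⊕ Fin n) → Fin n → 𝕜 :=
    Sum.elim (fun g i => (g : StrongDual 𝕜 W) (w i) / ((Me : ℝ) : 𝕜))
      (fun i' i => if i' = i then (((R i' : ℝ) : 𝕜))⁻¹ else 0) with hcA
  have hMeInv : ‖(((Me : ℝ) : 𝕜))⁻¹‖ = Me⁻¹ := by
    rw [norm_inv, RCLike.norm_ofReal, abs_of_pos hMe0]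
  have hrA : ∀ j, ‖∑ i, cA j i • ψ i‖ < 1 := by
    rintro (⟨g, hgT⟩ | i')
    · have hg1 : ‖g‖ ≤ 1 := by
        have := hTB hgT
        simpa [Metric.mem_closedBall, dist_zero_right] using this
      have hsum : ∑ i, cA (Sum.inl ⟨g, hgT⟩) i • ψ i
          = (((Me : ℝ) : 𝕜))⁻¹ • ∑ i, g (w i) • ψ i := by
        rw [Finset.smul_sum]
        refine Finset.sum_congr rfl (fun i _ => ?_)
        rw [smul_smul, hcA, Sum.elim_inl, div_eq_inv_mul]
      rw [hsum, norm_smul, hMeInv]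
      calc Me⁻¹ * ‖∑ i, g (w i) • ψ i‖ ≤ Me⁻¹ * (M * ‖g‖) := by
            refine mul_le_mul_of_nonneg_left (hGb g) (by positivity)
        _ ≤ Me⁻¹ * (M * 1) := by
            refine mul_le_mul_of_nonneg_left ?_ (by positivity)
            exact mul_le_mul_of_nonneg_left hg1 hM0
        _ = M / Me := by field_simp
        _ < 1 := by
            rw [div_lt_one hMe0, hMe]
            linarith
    · have hsum : ∑ i, cA (Sum.inr i') i • ψ i = (((R i' : ℝ) : 𝕜))⁻¹ • ψ i' := by
        rw [Finset.sum_eq_single_of_mem i' (Finset.mem_univ i') (fun i _ hi => by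
          rw [hcA, Sum.elim_inr, if_neg (fun h => hi h.symm)]; exact zero_smul 𝕜 (ψ i))]
        rw [hcA, Sum.elim_inr, if_pos rfl]
      rw [hsum, norm_smul, norm_inv, RCLike.norm_ofReal, abs_of_pos (hR0 i')]
      have h15 : ‖ψ i'‖ < R i' := by
        have : R i' = ‖ψ i'‖ + 1 := by rw [hR]
        rw [this]
        linarith
      calc (R i')⁻¹ * ‖ψ i'‖ < (R i')⁻¹ * R i' :=
            mul_lt_mul_of_pos_left h15 (by positivity)
        _ = 1 := inv_mul_cancel₀ (ne_of_gt (hR0 i'))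
  obtain ⟨y, hyY, hybound⟩ := key_separation Y x₀ ψ hΔ cA hrA
  set x1 : Fin n → X := fun i => x₀ i + y i with hx1
  have hd1 : ∀ i j, ((w j : StrongDual 𝕜 X)) (x1 i) = if j = i then 1 else 0 := by
    intro i j
    rw [hx1]
    simp only
    rw [_root_.map_add, hd₀ i j]
    have h14 : ((w j : StrongDual 𝕜 X)) (y i) = 0 := hyY i (w j) (w j).2
    rw [h14, add_zero]
  have hTbound : ∀ g : StrongDual 𝕜 W, g ∈ T → ‖∑ i, g (w i) • x1 i‖ ≤ Me := by
    intro g hg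
    have h6 := hybound (Sum.inl ⟨g, hg⟩)
    have h7 : ∑ i, cA (Sum.inl ⟨g, hg⟩) i • (x₀ i + y i)
        = (((Me : ℝ) : 𝕜))⁻¹ • ∑ i, g (w i) • x1 i := by
      rw [Finset.smul_sum]
      refine Finset.sum_congr rfl (fun i _ => ?_)
      rw [hx1]
      simp only
      rw [smul_smul, hcA, Sum.elim_inl, div_eq_inv_mul]
    rw [h7, norm_smul, hMeInv] at h6
    calc ‖∑ i, g (w i) • x1 i‖ = Me * (Me⁻¹ * ‖∑ i, g (w i) • x1 i‖) := by
          field_simp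
      _ ≤ Me * 1 := mul_le_mul_of_nonneg_left h6 (le_of_lt hMe0)
      _ = Me := mul_one Me
  have hRbound : ∀ i', ‖x1 i'‖ ≤ R i' := by
    intro i'
    have h6 := hybound (Sum.inr i')
    have h7 : ∑ i, cA (Sum.inr i') i • (x₀ i + y i) = (((R i' : ℝ) : 𝕜))⁻¹ • x1 i' := by
      rw [Finset.sum_eq_single_of_mem i' (Finset.mem_univ i') (fun i _ hi => by
        rw [hcA, Sum.elim_inr, if_neg (fun h => hi h.symm), zero_smul])]
      rw [hcA, Sum.elim_inr, if_pos rfl, hx1]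
    rw [h7, norm_smul, norm_inv, RCLike.norm_ofReal, abs_of_pos (hR0 i')] at h6
    calc ‖x1 i'‖ = R i' * ((R i')⁻¹ * ‖x1 i'‖) := by
          rw [← mul_assoc, mul_inv_cancel₀ (hR0 i').ne', one_mul]
      _ ≤ R i' * 1 := mul_le_mul_of_nonneg_left h6 (le_of_lt (hR0 i'))
      _ = R i' := mul_one _
  have hBall : ∀ g : StrongDual 𝕜 W, ‖g‖ ≤ 1 → ‖∑ i, g (w i) • x1 i‖ ≤ M + ε := by
    intro g hg
    have hgB : g ∈ Metric.closedBall (0 : StrongDual 𝕜 W) 1 := by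
      simpa [Metric.mem_closedBall, dist_zero_right] using hg
    have hcov := hTcov hgB
    simp only [Set.mem_iUnion, Metric.mem_ball, exists_prop] at hcov
    obtain ⟨g', hg'T, hgg'⟩ := hcov
    have hsplit : ∑ i, g (w i) • x1 i
        = (∑ i, g' (w i) • x1 i) + ∑ i, ((g - g') (w i)) • x1 i := by
      rw [← Finset.sum_add_distrib]
      refine Finset.sum_congr rfl (fun i _ => ?_)
      rw [← add_smul]
      congr 1
      rw [ContinuousLinearMap.sub_apply]
      ring
    rw [hsplit]
    have hterm : ∀ i : Fin n, ‖((g - g') (w i)) • x1 i‖ ≤ δ * (‖(w i : StrongDual 𝕜 X)‖ * R i) := by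
      intro i
      rw [norm_smul]
      have e1 : ‖(g - g') (w i)‖ ≤ δ * ‖(w i : StrongDual 𝕜 X)‖ := by
        have e2 : ‖(g - g') (w i)‖ ≤ ‖g - g'‖ * ‖w i‖ := (g - g').le_opNorm (w i)
        have e3 : ‖g - g'‖ ≤ δ := by
          rw [← dist_eq_norm]
          exact le_of_lt hgg'
        have e4 : ‖w i‖ = ‖(w i : StrongDual 𝕜 X)‖ := rfl
        calc ‖(g - g') (w i)‖ ≤ ‖g - g'‖ * ‖w i‖ := e2
          _ ≤ δ * ‖w i‖ := mul_le_mul_of_nonneg_right e3 (norm_nonneg _)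
          _ = δ * ‖(w i : StrongDual 𝕜 X)‖ := by rw [e4]
      calc ‖(g - g') (w i)‖ * ‖x1 i‖ ≤ (δ * ‖(w i : StrongDual 𝕜 X)‖) * R i := by
            refine mul_le_mul e1 (hRbound i) (norm_nonneg _) ?_
            positivity
        _ = δ * (‖(w i : StrongDual 𝕜 X)‖ * R i) := by ring
    calc ‖(∑ i, g' (w i) • x1 i) + ∑ i, ((g - g') (w i)) • x1 i‖
        ≤ ‖∑ i, g' (w i) • x1 i‖ + ‖∑ i, ((g - g') (w i)) • x1 i‖ := norm_add_le _ _
      _ ≤ Me + ∑ i, δ * (‖(w i : StrongDual 𝕜 X)‖ * R i) := by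
          refine add_le_add (hTbound g' hg'T) ?_
          exact le_trans (norm_sum_le _ _) (Finset.sum_le_sum (fun i _ => hterm i))
      _ = Me + δ * (∑ i, ‖(w i : StrongDual 𝕜 X)‖ * R i) := by rw [← Finset.mul_sum]
      _ ≤ Me + δ * D := by
          refine add_le_add_right ?_ Me
          refine mul_le_mul_of_nonneg_left ?_ (le_of_lt hδ0)
          rw [hD]
          linarith
      _ = M + ε := by
          rw [hMe, hδdef]
          field_simp
          ring
  have hAll : ∀ g : StrongDual 𝕜 W, ‖∑ i, g (w i) • x1 i‖ ≤ (M + ε) * ‖g‖ := by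
    intro g
    rcases eq_or_ne g 0 with rfl | hg0
    · simp
    · have hg0' : (0:ℝ) < ‖g‖ := (norm_pos_iff (a := g)).mpr hg0
      set g1 : StrongDual 𝕜 W := (((‖g‖ : ℝ) : 𝕜))⁻¹ • g with hg1def
      have hg1n : ‖g1‖ ≤ 1 := by
        rw [hg1def, norm_smul, norm_inv, RCLike.norm_ofReal, abs_of_pos hg0',
          inv_mul_cancel₀ (ne_of_gt hg0')]
      have h9 := hBall g1 hg1n
      have h10 : ∑ i, g1 (w i) • x1 i = (((‖g‖ : ℝ) : 𝕜))⁻¹ • ∑ i, g (w i) • x1 i := by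
        rw [Finset.smul_sum]
        refine Finset.sum_congr rfl (fun i _ => ?_)
        rw [hg1def, ContinuousLinearMap.smul_apply, smul_smul]
        rfl
      rw [h10, norm_smul, norm_inv, RCLike.norm_ofReal, abs_of_pos hg0'] at h9
      calc ‖∑ i, g (w i) • x1 i‖ = ‖g‖ * (‖g‖⁻¹ * ‖∑ i, g (w i) • x1 i‖) := by
            field_simp
        _ ≤ ‖g‖ * (M + ε) := mul_le_mul_of_nonneg_left h9 (norm_nonneg g)
        _ = (M + ε) * ‖g‖ := mul_comm _ _
  have hQ'norm : ‖projMap x1 (fun i => ((w i : StrongDual 𝕜 X)))‖ ≤ M + ε :=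
    projMap_norm_le W (fun i => w i) x1 (M + ε) (by positivity) hAll
  have hmemSw : ‖projMap x1 (fun i => ((w i : StrongDual 𝕜 X)))‖ ∈ Sw :=
    ⟨_, isProjectionOnto_projMap W w x1 hd1, projMap_weakStar _ _, rfl⟩
  exact le_trans (csInf_le hbddw hmemSw) hQ'norm

end Helpers

end InstSec

/-- For a finite-dimensional subspace `W` of the dual of a Banach space `X`,
the infimum of norms of weak*-continuous projections onto `W` coincides with the
infimum of norms of all bounded projections onto `W`: `λ_{w*}(W, X*) = λ(W, X*)`. -/
theorem wstar_projConst_eq_projConst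
    (X : Type*) [NormedAddCommGroup X] [NormedSpace 𝕜 X] [CompleteSpace X]
    (W : Submodule 𝕜 (StrongDual 𝕜 X)) [FiniteDimensional 𝕜 W] :
    sInf {c : ℝ | ∃ Q : StrongDual 𝕜 X →L[𝕜] StrongDual 𝕜 X,
        IsProjectionOnto W Q ∧ IsWeakStarContinuous Q ∧ ‖Q‖ = c} = projConst W := by
  exact wstar_projConst_eq_projConst_aux X W
end
end

section
/- Let X be a Banach space over 𝕜 (𝕜 = ℝ or ℂ) with the Daugavet property, and let Y ⊆ X be a proper closed subspace of finite codimension n ≥ 1. Then λ(Y, X) ≥ 2. -/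
open MeasureTheory NormedSpace

noncomputable section

variable {𝕜 : Type*} [RCLike 𝕜] {F : Type*} [NormedAddCommGroup F] [NormedSpace 𝕜 F]

/-- The Daugavet property: every finite-rank bounded operator `T` satisfies
`‖Id + T‖ = 1 + ‖T‖`. -/
def DaugavetProperty (𝕜 X : Type*) [RCLike 𝕜] [NormedAddCommGroup X] [NormedSpace 𝕜 X] : Prop :=
  ∀ T : X →L[𝕜] X, FiniteDimensional 𝕜 (LinearMap.range (T : X →ₗ[𝕜] X)) →
    ‖ContinuousLinearMap.id 𝕜 X + T‖ = 1 + ‖T‖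

/-- In a Daugavet space, every proper closed subspace of finite codimension `n ≥ 1`
has relative projection constant at least `2`. -/
theorem daugavet_finite_codim_lower_bound
    (X : Type*) [NormedAddCommGroup X] [NormedSpace 𝕜 X] [CompleteSpace X]
    (hX : DaugavetProperty 𝕜 X)
    (Y : Submodule 𝕜 X) (hclosed : IsClosed (Y : Set X)) (hproper : Y ≠ ⊤)
    (n : ℕ) (hn : 1 ≤ n) [FiniteDimensional 𝕜 (X ⧸ Y)]
    (hcodim : Module.finrank 𝕜 (X ⧸ Y) = n) :
    2 ≤ projConst Y := by
  -- The set of norms of projections is nonempty.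
  obtain ⟨f, hf⟩ := Submodule.ClosedComplemented.of_quotient_finiteDimensional (p := Y) hclosed
  have hne : Set.Nonempty {c : ℝ | ∃ P : X →L[𝕜] X, IsProjectionOnto Y P ∧ ‖P‖ = c} := by
    refine ⟨‖Y.subtypeL.comp f‖, Y.subtypeL.comp f, ⟨fun x => (f x).2, fun e he => ?_⟩, rfl⟩
    simpa using congrArg (Y.subtype) (hf ⟨e, he⟩)
  refine le_csInf hne ?_
  rintro c ⟨P, ⟨hmem, hfix⟩, rfl⟩
  -- T = P - id has finite rank since it vanishes on Y.
  set T : X →L[𝕜] X := P - ContinuousLinearMap.id 𝕜 X with hT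
  have hYker : Y ≤ LinearMap.ker (T : X →ₗ[𝕜] X) := by
    intro e he
    simp [hT, hfix e he]
  have hrange : FiniteDimensional 𝕜 (LinearMap.range (T : X →ₗ[𝕜] X)) := by
    have h1 : (Submodule.liftQ Y (T : X →ₗ[𝕜] X) hYker).comp Y.mkQ = (T : X →ₗ[𝕜] X) :=
      Submodule.liftQ_mkQ _ _ _
    have h2 := congrArg LinearMap.range h1
    rw [LinearMap.range_comp, Submodule.range_mkQ, Submodule.map_top] at h2
    rw [← h2]
    infer_instance
  have hDag := hX T hrange
  have hid : ContinuousLinearMap.id 𝕜 X + T = P := by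
    rw [hT]; abel
  rw [hid] at hDag
  -- ‖T‖ ≥ 1 : take x ∉ Y, u = T x ≠ 0, T u = -u.
  have hTnorm : 1 ≤ ‖T‖ := by
    obtain ⟨x, hx⟩ : ∃ x, x ∉ Y := by
      by_contra h
      push_neg at h
      exact hproper (Submodule.eq_top_iff'.2 h)
    set u := T x with hu
    have hu0 : u ≠ 0 := by
      intro h0
      apply hx
      have : P x = x := by
        have h1 : P x - x = 0 := by simpa [hu, hT] using h0
        exact sub_eq_zero.mp h1
      rw [← this]; exact hmem x
    have hTu : T u = -u := by
      have hPu : P u = 0 := by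
        have hPx : P (P x) = P x := hfix (P x) (hmem x)
        simp [hu, hT, map_sub, hPx]
      simp [hT, hPu]
    have : ‖u‖ ≤ ‖T‖ * ‖u‖ := by
      calc ‖u‖ = ‖T u‖ := by rw [hTu, norm_neg]
      _ ≤ ‖T‖ * ‖u‖ := T.le_opNorm u
    have hupos : 0 < ‖u‖ := norm_pos_iff.2 hu0
    exact le_of_mul_le_mul_right (by linarith) hupos
  linarith
end
end

section
/- Let X be a Banach space over 𝕜 (𝕜 = ℝ or ℂ) with the Daugavet property, and let f ∈ X* be a nonzero continuous linear functional. Then λ(ker f, X) = 2; that is, every hyperplane in X has relative projection constant exactly 2. -/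
open MeasureTheory NormedSpace

noncomputable section

variable {𝕜 : Type*} [RCLike 𝕜] {F : Type*} [NormedAddCommGroup F] [NormedSpace 𝕜 F]

/-- Lower bound: any projection onto a hyperplane in a Daugavet space has norm at least 2. -/
lemma daugavet_proj_lower {X : Type*} [NormedAddCommGroup X] [NormedSpace 𝕜 X]
    (hX : DaugavetProperty 𝕜 X) (f : StrongDual 𝕜 X) (hf : f ≠ 0)
    (P : X →L[𝕜] X) (hP : IsProjectionOnto (LinearMap.ker (f : X →ₗ[𝕜] 𝕜)) P) : 2 ≤ ‖P‖ := by
  obtain ⟨x₀, hx₀⟩ : ∃ x, f x ≠ 0 := by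
    by_contra h
    push_neg at h
    exact hf (by ext x; simp [h x])
  set w : X := (f x₀)⁻¹ • x₀ with hw_def
  have hw : f w = 1 := by
    simp [hw_def, _root_.map_smul, smul_eq_mul, inv_mul_cancel₀ hx₀]
  set c : X := P w - w with hc_def
  have hfPw : f (P w) = 0 := LinearMap.mem_ker.mp (hP.1 w)
  have hc : f c = -1 := by simp [hc_def, map_sub, hfPw, hw]
  have hPx : ∀ x, P x = x + f x • c := by
    intro x
    have he : f (x - f x • w) = 0 := by
      simp [map_sub, _root_.map_smul, hw, smul_eq_mul]
    have h2 := hP.2 _ (LinearMap.mem_ker.mpr he)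
    have h3 : P x - f x • P w = x - f x • w := by
      simpa [map_sub, _root_.map_smul] using h2
    have : P x = x - f x • w + f x • P w := by
      rw [← h3]; abel
    rw [this, hc_def]
    rw [smul_sub]; abel
  set T : X →L[𝕜] X := f.smulRight c with hT_def
  have hPT : P = ContinuousLinearMap.id 𝕜 X + T := by
    ext x
    simp [hT_def, hPx x, ContinuousLinearMap.smulRight_apply]
  have hfin : FiniteDimensional 𝕜 (LinearMap.range (T : X →ₗ[𝕜] X)) := by
    have hle : LinearMap.range (T : X →ₗ[𝕜] X) ≤ Submodule.span 𝕜 {c} := by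
      rintro y ⟨x, rfl⟩
      exact Submodule.mem_span_singleton.mpr ⟨f x, rfl⟩
    exact Submodule.finiteDimensional_of_le hle
  have hD := hX T hfin
  have hTnorm : ‖T‖ = ‖f‖ * ‖c‖ := f.norm_smulRight_apply c
  have h1 : (1 : ℝ) ≤ ‖T‖ := by
    have : (1 : ℝ) = ‖f c‖ := by rw [hc]; simp
    rw [hTnorm, this]
    exact f.le_opNorm c
  rw [hPT, hD]
  linarith

/-- Upper bound construction: a projection onto `ker f` from a point `w` with `f w = 1`. -/
lemma daugavet_proj_exists {X : Type*} [NormedAddCommGroup X] [NormedSpace 𝕜 X]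
    (f : StrongDual 𝕜 X) (w : X) (hw : f w = 1) :
    ∃ P : X →L[𝕜] X, IsProjectionOnto (LinearMap.ker (f : X →ₗ[𝕜] 𝕜)) P ∧ ‖P‖ ≤ 1 + ‖f‖ * ‖w‖ := by
  have : Nontrivial X := by
    rcases subsingleton_or_nontrivial X with h | h
    · exfalso
      have : f w = 0 := by rw [Subsingleton.elim w 0]; simp
      rw [hw] at this; exact one_ne_zero this
    · exact h
  refine ⟨ContinuousLinearMap.id 𝕜 X - f.smulRight w, ⟨?_, ?_⟩, ?_⟩
  · intro x
    simp [LinearMap.mem_ker, ContinuousLinearMap.smulRight_apply, map_sub, _root_.map_smul, hw,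
      smul_eq_mul]
  · intro e he
    have : f e = 0 := LinearMap.mem_ker.mp he
    simp [ContinuousLinearMap.smulRight_apply, this]
  · calc ‖ContinuousLinearMap.id 𝕜 X - f.smulRight w‖
        ≤ ‖ContinuousLinearMap.id 𝕜 X‖ + ‖f.smulRight w‖ := norm_sub_le _ _
      _ = 1 + ‖f‖ * ‖w‖ := by rw [ContinuousLinearMap.norm_id, f.norm_smulRight_apply]

/-- In a Daugavet space, every hyperplane `ker f` (for `f ∈ X*`, `f ≠ 0`) has relative
projection constant exactly `2`. -/
theorem daugavet_hyperplane_projConst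
    (X : Type*) [NormedAddCommGroup X] [NormedSpace 𝕜 X] [CompleteSpace X]
    (hX : DaugavetProperty 𝕜 X)
    (f : StrongDual 𝕜 X) (hf : f ≠ 0) :
    projConst (LinearMap.ker (f : X →ₗ[𝕜] 𝕜)) = 2 := by
  set S : Set ℝ := {c : ℝ | ∃ P : X →L[𝕜] X, IsProjectionOnto (LinearMap.ker (f : X →ₗ[𝕜] 𝕜)) P ∧ ‖P‖ = c}
    with hS_def
  have hlb : ∀ s ∈ S, (2 : ℝ) ≤ s := by
    rintro s ⟨P, hP, rfl⟩
    exact daugavet_proj_lower hX f hf P hP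
  have hbdd : BddBelow S := ⟨2, hlb⟩
  obtain ⟨x₀, hx₀⟩ : ∃ x, f x ≠ 0 := by
    by_contra h
    push_neg at h
    exact hf (by ext x; simp [h x])
  have hne : S.Nonempty := by
    obtain ⟨P, hP, _⟩ := daugavet_proj_exists f ((f x₀)⁻¹ • x₀)
      (by simp [_root_.map_smul, smul_eq_mul, inv_mul_cancel₀ hx₀])
    exact ⟨‖P‖, P, hP, rfl⟩
  have hfpos : 0 < ‖f‖ := norm_pos_iff.mpr hf
  refine le_antisymm ?_ (le_csInf hne hlb)
  refine le_of_forall_pos_lt_add fun ε hε => ?_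
  -- find x with ‖x‖ < 1 and ‖f‖ / (1 + ε) < ‖f x‖
  have hr : ‖f‖ / (1 + ε) < ‖f‖ := by
    rw [div_lt_iff₀ (by linarith)]
    nlinarith
  obtain ⟨x, hx1, hx2⟩ := f.exists_lt_apply_of_lt_opNorm hr
  have hfx : f x ≠ 0 := by
    intro h
    rw [h] at hx2
    simp at hx2
    have := div_pos hfpos (by linarith : (0:ℝ) < 1 + ε)
    linarith
  obtain ⟨P, hP, hPle⟩ := daugavet_proj_exists f ((f x)⁻¹ • x)
    (by simp [_root_.map_smul, smul_eq_mul, inv_mul_cancel₀ hfx])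
  have hnw : ‖(f x)⁻¹ • x‖ = ‖x‖ / ‖f x‖ := by
    rw [norm_smul, norm_inv]; ring
  have hfx_pos : 0 < ‖f x‖ := norm_pos_iff.mpr hfx
  have key : ‖f‖ * ‖(f x)⁻¹ • x‖ < 1 + ε := by
    rw [hnw]
    have h1 : ‖f‖ * (‖x‖ / ‖f x‖) ≤ ‖f‖ / ‖f x‖ := by
      rw [show ‖f‖ * (‖x‖ / ‖f x‖) = ‖f‖ * ‖x‖ / ‖f x‖ from by ring]
      have hx' : ‖f‖ * ‖x‖ ≤ ‖f‖ := by nlinarith [norm_nonneg x]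
      gcongr
    have h2 : ‖f‖ / ‖f x‖ < 1 + ε := by
      rw [div_lt_iff₀ hfx_pos]
      have := (div_lt_iff₀ (by linarith : (0:ℝ) < 1 + ε)).mp hx2
      linarith [mul_comm (1 + ε) ‖f x‖]
    linarith
  calc projConst (LinearMap.ker (f : X →ₗ[𝕜] 𝕜)) ≤ ‖P‖ := csInf_le hbdd ⟨P, hP, rfl⟩
    _ ≤ 1 + ‖f‖ * ‖(f x)⁻¹ • x‖ := hPle
    _ < 2 + ε := by linarith
end
end

section
/- Let X be a Banach space over 𝕜 (𝕜 = ℝ or ℂ) with the Daugavet property, and let f ∈ X* be a nonzero continuous linear functional. Then there exists a minimal projection from X onto ker f (i.e. a projection P onto ker f with ‖P‖ = λ(ker f, X) = 2) if and only if f attains its norm, i.e. there exists x ∈ X with ‖x‖ = 1 and |f(x)| = ‖f‖. -/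
open MeasureTheory NormedSpace

noncomputable section

variable {𝕜 : Type*} [RCLike 𝕜] {F : Type*} [NormedAddCommGroup F] [NormedSpace 𝕜 F]

namespace DaugavetAuxNA

variable {X : Type*} [NormedAddCommGroup X] [NormedSpace 𝕜 X]

lemma isProj (f : StrongDual 𝕜 X) (z : X) (hz : f z = 1) :
    IsProjectionOnto (LinearMap.ker (f : X →ₗ[𝕜] 𝕜)) (ContinuousLinearMap.id 𝕜 X - f.smulRight z) := by
  constructor
  · intro x
    simp [LinearMap.mem_ker, ContinuousLinearMap.sub_apply, _root_.map_smul, hz, smul_eq_mul]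
  · intro e he
    have h : f e = 0 := he
    simp [ContinuousLinearMap.sub_apply, h]

lemma proj_form (f : StrongDual 𝕜 X) (hf : f ≠ 0) (P : X →L[𝕜] X)
    (hP : IsProjectionOnto (LinearMap.ker (f : X →ₗ[𝕜] 𝕜)) P) :
    ∃ z : X, f z = 1 ∧ P = ContinuousLinearMap.id 𝕜 X - f.smulRight z := by
  obtain ⟨x₀, hx₀⟩ : ∃ x₀, f x₀ ≠ 0 := by
    by_contra h
    push_neg at h
    exact hf (ContinuousLinearMap.ext fun x => by simp [h x])
  refine ⟨(f x₀)⁻¹ • (x₀ - P x₀), ?_, ?_⟩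
  · have h1 : f (P x₀) = 0 := hP.1 x₀
    simp [_root_.map_smul, map_sub, h1, smul_eq_mul, inv_mul_cancel₀ hx₀]
  · ext x
    have hker : x - (f x * (f x₀)⁻¹) • x₀ ∈ LinearMap.ker (f : X →ₗ[𝕜] 𝕜) := by
      simp [LinearMap.mem_ker, map_sub, _root_.map_smul, smul_eq_mul, mul_assoc,
        inv_mul_cancel₀ hx₀]
    have h2 := hP.2 _ hker
    rw [map_sub, _root_.map_smul] at h2
    have h3 : P x = x - (f x * (f x₀)⁻¹) • x₀ + (f x * (f x₀)⁻¹) • P x₀ :=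
      sub_eq_iff_eq_add.mp h2
    simp only [ContinuousLinearMap.sub_apply, ContinuousLinearMap.id_apply,
      ContinuousLinearMap.smulRight_apply]
    rw [smul_smul, smul_sub, h3]
    abel

lemma norm_proj {X : Type*} [NormedAddCommGroup X] [NormedSpace 𝕜 X]
    (hX : DaugavetProperty 𝕜 X) (f : StrongDual 𝕜 X) (z : X) :
    ‖ContinuousLinearMap.id 𝕜 X - f.smulRight z‖ = 1 + ‖f‖ * ‖z‖ := by
  have hfin : FiniteDimensional 𝕜
      (LinearMap.range (((-(f.smulRight z)) : X →L[𝕜] X) : X →ₗ[𝕜] X)) := by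
    have hle : LinearMap.range (((-(f.smulRight z)) : X →L[𝕜] X) : X →ₗ[𝕜] X) ≤ 𝕜 ∙ z := by
      rintro _ ⟨x, rfl⟩
      refine Submodule.mem_span_singleton.2 ⟨-(f x), ?_⟩
      simp [neg_smul]
    exact Submodule.finiteDimensional_of_le hle
  have h := hX (-(f.smulRight z)) hfin
  rw [← sub_eq_add_neg, norm_neg, ContinuousLinearMap.norm_smulRight_apply] at h
  exact h

lemma one_le_mul (f : StrongDual 𝕜 X) {z : X} (hz : f z = 1) : 1 ≤ ‖f‖ * ‖z‖ := by
  have h := f.le_opNorm z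
  rw [hz] at h
  simpa using h

lemma projConst_ker (hX : DaugavetProperty 𝕜 X) (f : StrongDual 𝕜 X) (hf : f ≠ 0) :
    projConst (LinearMap.ker (f : X →ₗ[𝕜] 𝕜)) = 2 := by
  have hfpos : (0 : ℝ) < ‖f‖ := norm_pos_iff.2 hf
  set S := {c : ℝ | ∃ P : X →L[𝕜] X, IsProjectionOnto (LinearMap.ker (f : X →ₗ[𝕜] 𝕜)) P ∧ ‖P‖ = c} with hS
  have hlb : ∀ c ∈ S, 2 ≤ c := by
    rintro c ⟨P, hP, rfl⟩
    obtain ⟨z, hz, rfl⟩ := proj_form f hf P hP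
    rw [norm_proj hX f z]
    have := one_le_mul f hz
    linarith
  have hbdd : BddBelow S := ⟨2, hlb⟩
  have hne : S.Nonempty := by
    obtain ⟨x₀, hx₀⟩ : ∃ x₀, f x₀ ≠ 0 := by
      by_contra h
      push_neg at h
      exact hf (ContinuousLinearMap.ext fun x => by simp [h x])
    have hz : f ((f x₀)⁻¹ • x₀) = 1 := by
      simp [_root_.map_smul, smul_eq_mul, inv_mul_cancel₀ hx₀]
    exact ⟨_, _, isProj f _ hz, rfl⟩
  refine le_antisymm ?_ (le_csInf hne hlb)
  refine le_of_forall_pos_le_add fun ε hε => ?_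
  have h1ε : (0 : ℝ) < 1 + ε := by linarith
  have hr : ‖f‖ / (1 + ε) < ‖f‖ := by
    rw [div_lt_iff₀ h1ε]
    nlinarith
  obtain ⟨x, hx1, hx2⟩ := f.exists_lt_apply_of_lt_opNorm hr
  have hrpos : (0 : ℝ) < ‖f‖ / (1 + ε) := div_pos hfpos h1ε
  have hfxpos : (0 : ℝ) < ‖f x‖ := lt_trans hrpos hx2
  have hfx : f x ≠ 0 := by
    intro h
    rw [h] at hfxpos
    simp at hfxpos
  set z := (f x)⁻¹ • x with hzdef
  have hz : f z = 1 := by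
    simp [hzdef, _root_.map_smul, smul_eq_mul, inv_mul_cancel₀ hfx]
  have hmem : (1 + ‖f‖ * ‖z‖) ∈ S := ⟨_, isProj f z hz, norm_proj hX f z⟩
  have hzn : ‖z‖ ≤ ‖f x‖⁻¹ := by
    rw [hzdef, norm_smul, norm_inv]
    have : ‖f x‖⁻¹ * ‖x‖ ≤ ‖f x‖⁻¹ * 1 := by
      apply mul_le_mul_of_nonneg_left (le_of_lt hx1) (by positivity)
    simpa using this
  have hzn2 : ‖z‖ ≤ (1 + ε) / ‖f‖ := by
    refine hzn.trans ?_
    rw [inv_le_comm₀ hfxpos (by positivity), inv_div]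
    exact le_of_lt hx2
  have hkey : ‖f‖ * ‖z‖ ≤ 1 + ε := by
    have := mul_le_mul_of_nonneg_left hzn2 (le_of_lt hfpos)
    rwa [mul_div_cancel₀ _ (ne_of_gt hfpos)] at this
  calc sInf S ≤ 1 + ‖f‖ * ‖z‖ := csInf_le hbdd hmem
    _ ≤ 2 + ε := by linarith

end DaugavetAuxNA

/-- In a Daugavet space, a minimal projection onto the hyperplane `ker f` exists if and
only if the functional `f` attains its norm on the unit sphere. -/
theorem daugavet_hyperplane_minimal_projection_iff_norm_attaining
    (X : Type*) [NormedAddCommGroup X] [NormedSpace 𝕜 X] [CompleteSpace X]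
    (hX : DaugavetProperty 𝕜 X)
    (f : StrongDual 𝕜 X) (hf : f ≠ 0) :
    (∃ P : X →L[𝕜] X, IsProjectionOnto (LinearMap.ker (f : X →ₗ[𝕜] 𝕜)) P ∧
        ‖P‖ = projConst (LinearMap.ker (f : X →ₗ[𝕜] 𝕜))) ↔
      ∃ x : X, ‖x‖ = 1 ∧ ‖f x‖ = ‖f‖ := by
  have hfpos : (0 : ℝ) < ‖f‖ := norm_pos_iff.2 hf
  have h2 := DaugavetAuxNA.projConst_ker hX f hf
  constructor
  · rintro ⟨P, hP, hnorm⟩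
    obtain ⟨z, hz, rfl⟩ := DaugavetAuxNA.proj_form f hf P hP
    rw [DaugavetAuxNA.norm_proj hX f z, h2] at hnorm
    have hmul : ‖f‖ * ‖z‖ = 1 := by linarith
    have hz0 : z ≠ 0 := by
      intro h
      rw [h] at hz
      simp at hz
    have hznpos : (0 : ℝ) < ‖z‖ := norm_pos_iff.2 hz0
    refine ⟨((‖z‖⁻¹ : ℝ) : 𝕜) • z, ?_, ?_⟩
    · rw [norm_smul, RCLike.norm_ofReal, abs_of_pos (by positivity)]
      field_simp
    · rw [_root_.map_smul, smul_eq_mul, hz, mul_one, RCLike.norm_ofReal,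
        abs_of_pos (by positivity)]
      field_simp
      linarith [hmul]
  · rintro ⟨x, hx1, hx2⟩
    have hfx : f x ≠ 0 := by
      intro h
      rw [h, norm_zero] at hx2
      exact hf (norm_eq_zero.mp hx2.symm)
    set z := (f x)⁻¹ • x with hzdef
    have hz : f z = 1 := by
      simp [hzdef, _root_.map_smul, smul_eq_mul, inv_mul_cancel₀ hfx]
    have hzn : ‖z‖ = ‖f‖⁻¹ := by
      rw [hzdef, norm_smul, norm_inv, hx2, hx1, mul_one]
    refine ⟨_, DaugavetAuxNA.isProj f z hz, ?_⟩
    rw [DaugavetAuxNA.norm_proj hX f z, h2, hzn,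
      mul_inv_cancel₀ (ne_of_gt hfpos)]
    norm_num
end
end
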